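/- Let n ≥ 1 and N ≥ 0 be integers, and let β ∈ [0,1] be a point at which the Bernoulli polynomial B_{n+1} attains its minimum on [0,1]. If Q₁ and Q₂ are real-valued trigonometric polynomials of degree at most N with Qᵢ(x) ≤ 𝓑_{n+1}(x) for all x ∈ ℝ and ∫₀¹ (𝓑_{n+1}(x) − Qᵢ(x)) dx = −B_{n+1}(β)/(N+1)^{n+1} for i = 1, 2, then Q₁(x) = Q₂(x) for all x ∈ ℝ; that is, the extremal minorizing trigonometric polynomial of degree at most N is unique. -/

import Mathlib

/-!
Put `K = N + 1` and `x_j = (β + j) / K` for `j < K`. The `K`-point rule `∑ⱼ Q(x_j) = K ∫₀¹ Q` is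
exact for trigonometric polynomials of degree `< K`, and the multiplication theorem for Bernoulli
polynomials gives `∑ⱼ 𝓑_{n+1}(x_j) = K⁻ⁿ B_{n+1}(β)`. So the integral condition says that the
nonnegative gap `𝓑_{n+1} - Qᵢ` sums to zero over the nodes: each `Qᵢ` touches `𝓑_{n+1}` at every
node, and therefore has the same derivative as `𝓑_{n+1}` at every node that is not an integer.
At most one node is an integer, so `Q₁ - Q₂` has at least `2N + 1` zeros in a period counted with
multiplicity. Since `e^{2πiNx} (Q₁ - Q₂)(x) = P(e^{2πix})` for a polynomial `P` of degree `≤ 2N`,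
this forces `P = 0`.
-/

open MeasureTheory

/-- The `m`-th Bernoulli polynomial evaluated at a real number `x`,
with the generating function `t e^{xt}/(e^t - 1) = ∑ B_m(x) t^m / m!`. -/
noncomputable def bernoulliPoly (m : ℕ) (x : ℝ) : ℝ :=
  Polynomial.aeval x (Polynomial.bernoulli m)

/-- The `m`-th Bernoulli periodic function `𝓑_m(x) = B_m(x - ⌊x⌋)`. -/
noncomputable def bernoulliPer (m : ℕ) (x : ℝ) : ℝ :=
  bernoulliPoly m (x - ⌊x⌋)

/-- `f : ℝ → ℂ` is a trigonometric polynomial of degree at most `N`: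
`f x = ∑_{k=-N}^{N} c_k e^{2πikx}`. -/
def IsTrigPoly (N : ℕ) (f : ℝ → ℂ) : Prop :=
  ∃ c : ℤ → ℂ, ∀ x : ℝ,
    f x = ∑ k ∈ Finset.Icc (-(N : ℤ)) (N : ℤ),
      c k * Complex.exp (2 * (Real.pi : ℂ) * Complex.I * (k : ℂ) * (x : ℂ))

open Real Complex Finset Polynomial Topology

theorem deriv_eq_of_le_of_eq {f g : ℝ → ℝ} {a : ℝ} (hle : ∀ x, f x ≤ g x) (ha : f a = g a)
    (hf : DifferentiableAt ℝ f a) (hg : DifferentiableAt ℝ g a) : deriv f a = deriv g a := by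
  have hmin : IsLocalMin (g - f) a :=
    Filter.Eventually.of_forall fun x => by simpa [ha] using hle x
  have := hmin.deriv_eq_zero
  rw [deriv_sub hg hf, sub_eq_zero] at this
  exact this.symm

theorem hasDerivAt_ofReal_sub_eq_zero {f₁ f₂ g : ℝ → ℝ} {a : ℝ} (hle₁ : ∀ x, f₁ x ≤ g x)
    (hle₂ : ∀ x, f₂ x ≤ g x) (ha₁ : f₁ a = g a) (ha₂ : f₂ a = g a)
    (hf₁ : DifferentiableAt ℝ f₁ a) (hf₂ : DifferentiableAt ℝ f₂ a)
    (hg : DifferentiableAt ℝ g a) :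
    HasDerivAt ((fun x => (f₁ x : ℂ)) - fun x => (f₂ x : ℂ)) 0 a := by
  have h := (hf₁.hasDerivAt.sub hf₂.hasDerivAt).ofReal_comp
  rw [deriv_eq_of_le_of_eq hle₁ ha₁ hf₁ hg, deriv_eq_of_le_of_eq hle₂ ha₂ hf₂ hg, sub_self] at h
  simpa [Pi.sub_def] using h

theorem hasDerivAt_cexp_mul_ofReal (a : ℂ) (x : ℝ) :
    HasDerivAt (fun y : ℝ => cexp (a * y)) (a * cexp (a * x)) x := by
  simpa [mul_comm] using ((hasDerivAt_id (x : ℂ)).const_mul a).comp_ofReal.cexp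

theorem Polynomial.sum_rootMultiplicity_le_natDegree {R : Type*} [CommRing R] [IsDomain R]
    (p : R[X]) (s : Finset R) : ∑ a ∈ s, p.rootMultiplicity a ≤ p.natDegree := by
  classical
  simp only [← count_roots]
  calc ∑ a ∈ s, p.roots.count a ≤ ∑ a ∈ s ∪ p.roots.toFinset, p.roots.count a :=
        sum_le_sum_of_subset subset_union_left
    _ = Multiset.card p.roots := Multiset.sum_count_eq_card fun a ha => by simp [ha]
    _ ≤ p.natDegree := card_roots' p

theorem cexp_two_pi_I_mul_eq_iff {a b : ℝ} :
    cexp (2 * π * I * a) = cexp (2 * π * I * b) ↔ Int.fract a = Int.fract b := by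
  rw [exp_eq_exp_iff_exists_int, Int.fract_eq_fract]
  refine exists_congr fun z => ⟨fun h => ?_, fun h => ?_⟩
  · have : ((a - b : ℝ) : ℂ) = z :=
      mul_left_cancel₀ two_pi_I_ne_zero (by push_cast; linear_combination h)
    exact_mod_cast this
  · have : (a : ℂ) - b = z := by exact_mod_cast h
    linear_combination 2 * π * I * this

theorem integral_cexp_two_pi_I_int_mul (k : ℤ) :
    ∫ x in (0 : ℝ)..1, cexp (2 * π * I * k * x) = if k = 0 then 1 else 0 := by
  split_ifs with hk
  · simp [hk]
  · rw [integral_exp_mul_complex (mul_ne_zero two_pi_I_ne_zero (Int.cast_ne_zero.mpr hk))]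
    simp [show cexp (2 * π * I * k) = 1 by
      rw [show 2 * π * I * k = k * (2 * π * I) by ring]; exact exp_int_mul_two_pi_mul_I k]

theorem sum_cexp_two_pi_I_int_mul_nodes {K : ℕ} {k : ℤ} (hk : |k| < K) (t : ℝ) :
    ∑ j ∈ range K, cexp (2 * π * I * k * ((t + j / K : ℝ) : ℂ)) =
      if k = 0 then (K : ℂ) else 0 := by
  split_ifs with hk0
  · simp [hk0]
  have hK : (K : ℂ) ≠ 0 := by
    have : (0 : ℤ) < K := (abs_nonneg k).trans_lt hk
    exact_mod_cast this.ne'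
  set ζ := cexp (2 * π * I * k / K)
  have hterm : ∀ j : ℕ, cexp (2 * π * I * k * ((t + j / K : ℝ) : ℂ)) =
      cexp (2 * π * I * k * t) * ζ ^ j := by
    intro j
    rw [← Complex.exp_nat_mul, ← Complex.exp_add]
    congr 1
    push_cast
    field_simp
  have hζK : ζ ^ K = 1 := by
    rw [← Complex.exp_nat_mul, show (K : ℂ) * (2 * π * I * k / K) = k * (2 * π * I) by field_simp]
    exact exp_int_mul_two_pi_mul_I k
  have hζ : ζ ≠ 1 := by
    rw [Ne, Complex.exp_eq_one_iff]
    rintro ⟨z, hz⟩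
    field_simp at hz
    have hkz : k = K * z := by exact_mod_cast hz
    have hz0 : z ≠ 0 := by rintro rfl; simp_all
    have : (K : ℤ) ≤ |k| := by
      rw [hkz, abs_mul, Nat.abs_cast]
      exact le_mul_of_one_le_right (by positivity) (Int.one_le_abs hz0)
    omega
  simp only [hterm, ← mul_sum, geom_sum_eq hζ, hζK, sub_self, zero_div, mul_zero]

theorem injOn_fract_nodes (K : ℕ) (t : ℝ) :
    Set.InjOn (fun j : ℕ => Int.fract (t + j / K)) (range K) := by
  intro i hi j hj hij
  obtain ⟨z, hz⟩ := Int.fract_eq_fract.mp hij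
  have hi' := mem_range.mp hi
  have hj' := mem_range.mp hj
  have hK : (K : ℝ) ≠ 0 := Nat.cast_ne_zero.mpr (by omega)
  have hijz : (i : ℤ) - j = z * K := by
    have : (i : ℝ) - j = z * K := by
      field_simp at hz
      linarith
    exact_mod_cast this
  rcases eq_or_ne z 0 with rfl | hz0
  · omega
  · have hle : (K : ℤ) ≤ |(i : ℤ) - j| := by
      rw [hijz, abs_mul, Nat.abs_cast]
      exact le_mul_of_one_le_left (by positivity) (Int.one_le_abs hz0)
    have hlt : |(i : ℤ) - j| < K := abs_sub_lt_iff.mpr ⟨by omega, by omega⟩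
    omega

theorem card_le_card_filter_fract_ne_zero_add_one {ι : Type*} {s : Finset ι} {x : ι → ℝ}
    (hx : Set.InjOn (fun i => Int.fract (x i)) s) :
    #s ≤ #(s.filter fun i => Int.fract (x i) ≠ 0) + 1 := by
  have hint : #(s.filter fun i => ¬Int.fract (x i) ≠ 0) ≤ 1 := by
    refine card_le_one.mpr fun i hi j hj => hx (mem_filter.mp hi).1 (mem_filter.mp hj).1 ?_
    simp only [not_not, mem_filter] at hi hj
    exact hi.2.trans hj.2.symm
  rw [← card_filter_add_card_filter_not fun i => Int.fract (x i) ≠ 0]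
  omega

namespace IsTrigPoly

variable {N : ℕ} {f g : ℝ → ℂ}

theorem sub (hf : IsTrigPoly N f) (hg : IsTrigPoly N g) : IsTrigPoly N (f - g) := by
  obtain ⟨c, hc⟩ := hf
  obtain ⟨d, hd⟩ := hg
  exact ⟨c - d, fun x => by simp only [Pi.sub_apply, hc, hd, ← sum_sub_distrib, sub_mul]⟩

theorem differentiable (hf : IsTrigPoly N f) : Differentiable ℝ f := by
  obtain ⟨c, hc⟩ := hf
  rw [funext hc]
  fun_prop

theorem differentiable_ofReal {Q : ℝ → ℝ} (hQ : IsTrigPoly N fun x => (Q x : ℂ)) :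
    Differentiable ℝ Q := by
  have h := reCLM.differentiable.comp hQ.differentiable
  exact fun x => by simpa [Function.comp_def] using h x

theorem sum_nodes_eq_integral (hf : IsTrigPoly N f) {K : ℕ} (hK : N < K) (t : ℝ) :
    ∑ j ∈ range K, f (t + j / K) = K * ∫ x in (0 : ℝ)..1, f x := by
  obtain ⟨c, hc⟩ := hf
  have hint : ∫ x in (0 : ℝ)..1, f x = c 0 := by
    rw [intervalIntegral.integral_congr fun x _ => hc x, intervalIntegral.integral_finsetSum
      fun k _ => by apply Continuous.intervalIntegrable; fun_prop]
    simp [integral_cexp_two_pi_I_int_mul]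
  have hsum : ∑ j ∈ range K, f (t + j / K) = K * c 0 := by
    have hk : ∀ k ∈ Icc (-(N : ℤ)) N, |k| < K := fun k hk =>
      (abs_le.mpr (mem_Icc.mp hk)).trans_lt (by exact_mod_cast hK)
    rw [sum_congr rfl fun j _ => hc _, sum_comm,
      sum_congr rfl fun k hk' => by rw [← mul_sum, sum_cexp_two_pi_I_int_mul_nodes (hk k hk') t]]
    simp [mul_comm]
  rw [hint, hsum]

theorem exists_polynomial (hf : IsTrigPoly N f) : ∃ P : ℂ[X], P.natDegree ≤ 2 * N ∧
    ∀ x : ℝ, P.eval (cexp (2 * π * I * x)) = cexp (2 * π * I * N * x) * f x := by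
  obtain ⟨c, hc⟩ := hf
  refine ⟨∑ k ∈ Icc (-(N : ℤ)) N, C (c k) * X ^ (k + N).toNat, ?_, fun x => ?_⟩
  · refine natDegree_sum_le_of_forall_le _ _ fun k hk => ?_
    have := mem_Icc.mp hk
    exact (natDegree_C_mul_X_pow_le _ _).trans (by omega)
  · rw [hc, eval_finsetSum, mul_sum]
    refine sum_congr rfl fun k hk => ?_
    have hkN : (((k + N).toNat : ℕ) : ℂ) = k + N := by
      exact_mod_cast Int.toNat_of_nonneg (by linarith [(mem_Icc.mp hk).1] : 0 ≤ k + N)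
    rw [eval_mul, eval_C, eval_pow, eval_X, ← Complex.exp_nat_mul, hkN,
      mul_left_comm (cexp _) (c k), ← Complex.exp_add]
    ring_nf

theorem eq_zero_of_zeros (hf : IsTrigPoly N f) {ι : Type*} {s t : Finset ι} {x : ι → ℝ}
    (hx : Set.InjOn (fun i => Int.fract (x i)) s) (hts : t ⊆ s)
    (hzero : ∀ i ∈ s, f (x i) = 0) (hderiv : ∀ i ∈ t, HasDerivAt f 0 (x i))
    (hcard : 2 * N < #s + #t) : f = 0 := by
  classical
  obtain ⟨P, hdeg, hP⟩ := hf.exists_polynomial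
  set z : ι → ℂ := fun i => cexp (2 * π * I * x i)
  suffices hP0 : P = 0 by
    funext y
    simpa [hP0, Complex.exp_ne_zero] using hP y
  by_contra hP0
  have hroot : ∀ i ∈ s, P.IsRoot (z i) := fun i hi => by simp [z, hP, hzero i hi]
  have hroot' : ∀ i ∈ t, P.derivative.IsRoot (z i) := by
    intro i hi
    have h₁ := (P.hasDerivAt (z i)).comp (x i) (hasDerivAt_cexp_mul_ofReal (2 * π * I) (x i))
    have h₂ := (hasDerivAt_cexp_mul_ofReal (2 * π * I * N) (x i)).mul (hderiv i hi)
    simp only [hzero i (hts hi), mul_zero, add_zero] at h₂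
    rw [show (fun y : ℝ => cexp (2 * π * I * N * y)) * f =
        (fun w => P.eval w) ∘ fun y : ℝ => cexp (2 * π * I * y) from
      funext fun y => (hP y).symm] at h₂
    simpa [two_pi_I_ne_zero, Complex.exp_ne_zero] using h₁.unique h₂
  have hmult : ∀ i ∈ s, 1 + (if i ∈ t then 1 else 0) ≤ P.rootMultiplicity (z i) := by
    intro i hi
    split_ifs with hit
    · exact (one_lt_rootMultiplicity_iff_isRoot hP0).mpr ⟨hroot i hi, hroot' i hit⟩
    · exact (rootMultiplicity_pos hP0).mpr (hroot i hi)
  have hz : Set.InjOn z s := fun i hi j hj hij => hx hi hj (cexp_two_pi_I_mul_eq_iff.mp hij)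
  have : #s + #t ≤ 2 * N := calc
    #s + #t = ∑ i ∈ s, (1 + if i ∈ t then 1 else 0) := by
      rw [sum_add_distrib, sum_boole, filter_mem_eq_inter, inter_eq_right.mpr hts]; simp
    _ ≤ ∑ i ∈ s, P.rootMultiplicity (z i) := sum_le_sum hmult
    _ = ∑ a ∈ s.image z, P.rootMultiplicity a := (sum_image (f := P.rootMultiplicity) hz).symm
    _ ≤ 2 * N := (P.sum_rootMultiplicity_le_natDegree _).trans hdeg
  omega

theorem eq_of_minorants_touching {G Q₁ Q₂ : ℝ → ℝ}
    (hQ₁ : IsTrigPoly N fun x => (Q₁ x : ℂ)) (hQ₂ : IsTrigPoly N fun x => (Q₂ x : ℂ))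
    (hle₁ : ∀ x, Q₁ x ≤ G x) (hle₂ : ∀ x, Q₂ x ≤ G x)
    (hG : ∀ y, Int.fract y ≠ 0 → DifferentiableAt ℝ G y)
    {ι : Type*} {s : Finset ι} {x : ι → ℝ} (hx : Set.InjOn (fun i => Int.fract (x i)) s)
    (hcard : N < #s) (h₁ : ∀ i ∈ s, Q₁ (x i) = G (x i)) (h₂ : ∀ i ∈ s, Q₂ (x i) = G (x i)) :
    Q₁ = Q₂ := by
  have hdiff := (hQ₁.sub hQ₂).eq_zero_of_zeros hx (filter_subset (fun i => Int.fract (x i) ≠ 0) s)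
    (fun i hi => by simp only [Pi.sub_apply, h₁ i hi, h₂ i hi, sub_self])
    (fun i hi => by
      obtain ⟨hi, hfract⟩ := mem_filter.mp hi
      exact hasDerivAt_ofReal_sub_eq_zero hle₁ hle₂ (h₁ i hi) (h₂ i hi)
        (hQ₁.differentiable_ofReal _) (hQ₂.differentiable_ofReal _) (hG _ hfract))
    (by have := card_le_card_filter_fract_ne_zero_add_one hx; omega)
  funext y
  simpa [sub_eq_zero] using congrFun hdiff y

end IsTrigPoly

theorem bernoulliPoly_eq_bernoulliFun (m : ℕ) : bernoulliPoly m = bernoulliFun m := by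
  funext x
  simp [bernoulliPoly, bernoulliFun, aeval_def, eval_map]

theorem bernoulliPer_eq_bernoulliPoly {m : ℕ} (hm : m ≠ 1) {x : ℝ} (hx : x ∈ Set.Icc (0 : ℝ) 1) :
    bernoulliPer m x = bernoulliPoly m x := by
  rcases hx.2.eq_or_lt with rfl | hx1
  · simp [bernoulliPer, bernoulliPoly_eq_bernoulliFun, bernoulliFun_endpoints_eq_of_ne_one hm]
  · simp [bernoulliPer, Int.floor_eq_zero_iff.mpr ⟨hx.1, hx1⟩]

theorem floor_eventuallyEq_of_fract_ne_zero {a : ℝ} (ha : Int.fract a ≠ 0) :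
    (fun x : ℝ => (⌊x⌋ : ℝ)) =ᶠ[𝓝 a] fun _ => (⌊a⌋ : ℝ) := by
  have hlt : (⌊a⌋ : ℝ) < a := by
    have := (Int.fract_nonneg a).lt_of_ne' ha
    rwa [Int.fract, sub_pos] at this
  filter_upwards [Ioo_mem_nhds hlt (Int.lt_floor_add_one a)] with x hx
  rw [Int.floor_eq_iff.mpr ⟨hx.1.le, hx.2⟩]

theorem differentiableAt_bernoulliPer (m : ℕ) {a : ℝ} (ha : Int.fract a ≠ 0) :
    DifferentiableAt ℝ (bernoulliPer m) a := by
  have hpoly : DifferentiableAt ℝ (fun x => bernoulliPoly m (x - ⌊a⌋)) a :=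
    (Polynomial.differentiable_aeval _ _).comp a (differentiableAt_id.sub_const _)
  refine hpoly.congr_of_eventuallyEq ?_
  filter_upwards [floor_eventuallyEq_of_fract_ne_zero ha] with x hx
  rw [bernoulliPer, hx]

theorem integral_bernoulliPer_sub {m : ℕ} (hm0 : m ≠ 0) (hm1 : m ≠ 1) {Q : ℝ → ℝ}
    (hQ : Continuous Q) :
    ∫ x in (0 : ℝ)..1, (bernoulliPer m x - Q x) = -∫ x in (0 : ℝ)..1, Q x := by
  have hB : Continuous (bernoulliPoly m) := Polynomial.continuous_aeval _
  rw [intervalIntegral.integral_congr (g := fun x => bernoulliPoly m x - Q x) fun x hx => by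
      rw [Set.uIcc_of_le zero_le_one] at hx
      simp only [bernoulliPer_eq_bernoulliPoly hm1 hx],
    intervalIntegral.integral_sub (hB.intervalIntegrable _ _) (hQ.intervalIntegrable _ _),
    bernoulliPoly_eq_bernoulliFun, integral_bernoulliFun_eq_zero hm0, zero_sub]

theorem sum_bernoulliPer_nodes {m : ℕ} (hm : m ≠ 1) {K : ℕ} (hK : K ≠ 0) {β : ℝ}
    (hβ : β ∈ Set.Icc (0 : ℝ) 1) :
    ∑ j ∈ range K, bernoulliPer m (β / K + j / K) = K * bernoulliPoly m β / (K : ℝ) ^ m := by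
  have hK' : (K : ℝ) ≠ 0 := Nat.cast_ne_zero.mpr hK
  have hnode : ∀ j ∈ range K, β / K + j / K ∈ Set.Icc (0 : ℝ) 1 := by
    intro j hj
    have hjK : (j : ℝ) + 1 ≤ K := by exact_mod_cast mem_range.mp hj
    rw [← add_div, Set.mem_Icc, div_le_one (by positivity)]
    exact ⟨by have := hβ.1; positivity, by linarith [hβ.2]⟩
  have hmul := bernoulliFun_mul m hK (β / K)
  rw [mul_div_cancel₀ β hK'] at hmul
  rw [sum_congr rfl fun j hj => bernoulliPer_eq_bernoulliPoly hm (hnode j hj),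
    bernoulliPoly_eq_bernoulliFun, hmul]
  field_simp

theorem eq_bernoulliPer_at_nodes {m N K : ℕ} (hm : m ≠ 1) (hNK : N < K) {β : ℝ}
    (hβ : β ∈ Set.Icc (0 : ℝ) 1) {Q : ℝ → ℝ} (hQ : IsTrigPoly N fun x => (Q x : ℂ))
    (hle : ∀ x, Q x ≤ bernoulliPer m x)
    (hint : ∫ x in (0 : ℝ)..1, Q x = bernoulliPoly m β / (K : ℝ) ^ m) :
    ∀ j ∈ range K, Q (β / K + j / K) = bernoulliPer m (β / K + j / K) := by
  have hK : (K : ℝ) ≠ 0 := Nat.cast_ne_zero.mpr (by omega)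
  have hquad : ∑ j ∈ range K, Q (β / K + j / K) = K * ∫ x in (0 : ℝ)..1, Q x := by
    have := hQ.sum_nodes_eq_integral hNK (β / K)
    rw [intervalIntegral.integral_ofReal] at this
    exact_mod_cast this
  have hgap : ∑ j ∈ range K, (bernoulliPer m (β / K + j / K) - Q (β / K + j / K)) = 0 := by
    rw [sum_sub_distrib, sum_bernoulliPer_nodes hm (by omega) hβ, hquad, hint]
    ring
  intro j hj
  have := (sum_eq_zero_iff_of_nonneg fun i _ => sub_nonneg.mpr (hle _)).mp hgap j hj
  linarith

theorem extremal_minorant_unique_general (n N : ℕ) (hn : 1 ≤ n)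
    (β : ℝ) (hβmem : β ∈ Set.Icc (0 : ℝ) 1)
    (Q₁ Q₂ : ℝ → ℝ)
    (hQ₁trig : IsTrigPoly N (fun x => (Q₁ x : ℂ)))
    (hQ₂trig : IsTrigPoly N (fun x => (Q₂ x : ℂ)))
    (hQ₁le : ∀ x : ℝ, Q₁ x ≤ bernoulliPer (n + 1) x)
    (hQ₂le : ∀ x : ℝ, Q₂ x ≤ bernoulliPer (n + 1) x)
    (hQ₁int : (∫ x in (0 : ℝ)..1, (bernoulliPer (n + 1) x - Q₁ x)) =
      -(bernoulliPoly (n + 1) β) / ((N : ℝ) + 1) ^ (n + 1))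
    (hQ₂int : (∫ x in (0 : ℝ)..1, (bernoulliPer (n + 1) x - Q₂ x)) =
      -(bernoulliPoly (n + 1) β) / ((N : ℝ) + 1) ^ (n + 1)) :
    ∀ x : ℝ, Q₁ x = Q₂ x := by
  have hm : n + 1 ≠ 1 := by omega
  have hint {Q : ℝ → ℝ} (hQ : IsTrigPoly N fun x => (Q x : ℂ))
      (h : ∫ x in (0 : ℝ)..1, (bernoulliPer (n + 1) x - Q x) =
        -(bernoulliPoly (n + 1) β) / ((N : ℝ) + 1) ^ (n + 1)) :
      ∫ x in (0 : ℝ)..1, Q x = bernoulliPoly (n + 1) β / ((N + 1 : ℕ) : ℝ) ^ (n + 1) := by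
    rw [integral_bernoulliPer_sub (by omega) hm hQ.differentiable_ofReal.continuous, neg_div,
      neg_inj] at h
    exact_mod_cast h
  have hQ := IsTrigPoly.eq_of_minorants_touching hQ₁trig hQ₂trig hQ₁le hQ₂le
    (fun _ => differentiableAt_bernoulliPer _) (injOn_fract_nodes (N + 1) (β / (N + 1 : ℕ)))
    (by simp)
    (eq_bernoulliPer_at_nodes hm (Nat.lt_add_one N) hβmem hQ₁trig hQ₁le (hint hQ₁trig hQ₁int))
    (eq_bernoulliPer_at_nodes hm (Nat.lt_add_one N) hβmem hQ₂trig hQ₂le (hint hQ₂trig hQ₂int))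
  exact congrFun hQ

theorem extremal_minorant_unique (n N : ℕ) (hn : 1 ≤ n)
    (β : ℝ) (hβmem : β ∈ Set.Icc (0 : ℝ) 1)
    (hβ : ∀ x ∈ Set.Icc (0 : ℝ) 1, bernoulliPoly (n + 1) β ≤ bernoulliPoly (n + 1) x)
    (Q₁ Q₂ : ℝ → ℝ)
    (hQ₁trig : IsTrigPoly N (fun x => (Q₁ x : ℂ)))
    (hQ₂trig : IsTrigPoly N (fun x => (Q₂ x : ℂ)))
    (hQ₁le : ∀ x : ℝ, Q₁ x ≤ bernoulliPer (n + 1) x)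
    (hQ₂le : ∀ x : ℝ, Q₂ x ≤ bernoulliPer (n + 1) x)
    (hQ₁int : (∫ x in (0 : ℝ)..1, (bernoulliPer (n + 1) x - Q₁ x)) =
      -(bernoulliPoly (n + 1) β) / ((N : ℝ) + 1) ^ (n + 1))
    (hQ₂int : (∫ x in (0 : ℝ)..1, (bernoulliPer (n + 1) x - Q₂ x)) =
      -(bernoulliPoly (n + 1) β) / ((N : ℝ) + 1) ^ (n + 1)) :
    ∀ x : ℝ, Q₁ x = Q₂ x :=
  extremal_minorant_unique_general n N hn β hβmem Q₁ Q₂ hQ₁trig hQ₂trig hQ₁le hQ₂le hQ₁int hQ₂int
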